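/- arXiv:1511.01227 — 8 statements merged into one kernel-verified Lean document; each statement's English description precedes it below -/
import Mathlib

section
/- With Q=343, A=202, B=1.9, C=3.04, α₁=0.32, α₂=0.62, α₀=0.47, s₂=−0.482, L=Q/(B+C), the function h₊(η) = F(η) − G₊(η) has exactly two zeros in the interval [0,1]: a zero η*₊,u ∈ (0.2, 0.3) with h₊′(η*₊,u) > 0 and a zero η*₊,s ∈ (0.9, 1) with h₊′(η*₊,s) < 0. -/
/-!
Expanding the definitions, `h₊` is a cubic with negative leading coefficient whose second
derivative is negative on `[0, ∞)`, so `h₊` is strictly concave there. A strictly concave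
function takes the value `0` at most twice, and at two zeros `u < s` the secant slope is `0`,
which forces `h₊′ u > 0 > h₊′ s`. The two zeros exist by the intermediate value theorem, as
`h₊` changes sign on `[0.2, 0.3]` and on `[0.9, 1]`.
-/

noncomputable section

namespace GlacialCycles

/-- Insolation `Q = 343` W/m². -/
def Qp : ℝ := 343
/-- OLR constant `A = 202`. -/
def Ap : ℝ := 202
/-- OLR constant `B = 1.9`. -/
def Bp : ℝ := 1.9
/-- Transport constant `C = 3.04`. -/
def Cp : ℝ := 3.04
/-- Ice-free albedo `α₁ = 0.32`. -/
def α1p : ℝ := 0.32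
/-- Ice albedo `α₂ = 0.62`. -/
def α2p : ℝ := 0.62
/-- `α₀ = (α₁+α₂)/2 = 0.47`. -/
def α0p : ℝ := 0.47
/-- `s₂ = −0.482`. -/
def s2p : ℝ := -0.482
/-- `L = Q/(B+C)`. -/
def Lp : ℝ := Qp / (Bp + Cp)

/-- Second even Legendre polynomial `p₂(η) = (3η²−1)/2`. -/
def p2 (η : ℝ) : ℝ := (3*η^2 - 1)/2
/-- `P₂(η) = ∫₀^η p₂ = (η³−η)/2`. -/
def P2 (η : ℝ) : ℝ := (η^3 - η)/2

/-- `F(η) = (1/B)(Q(1−α₀) − A + C·L·(α₂−α₁)·(η − 1/2 + s₂ P₂(η)))`. -/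
def F (η : ℝ) : ℝ :=
  (1/Bp) * (Qp*(1 - α0p) - Ap + Cp*Lp*(α2p - α1p)*(η - 1/2 + s2p * P2 η))

/-- `G_{T_c}(η) = −L s₂ (1−α₀) p₂(η) + T_c`. -/
def G (Tc η : ℝ) : ℝ := -Lp*s2p*(1 - α0p) * p2 η + Tc

/-- `G₊ = G_{T_c}` with `T_c⁺ = −10`. -/
def Gplus (η : ℝ) : ℝ := G (-10) η
/-- `G₋ = G_{T_c}` with `T_c⁻ = −5.5`. -/
def Gminus (η : ℝ) : ℝ := G (-5.5) η

/-- `h₊ = F − G₊`. -/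
def hplus (η : ℝ) : ℝ := F η - Gplus η
/-- `h₋ = F − G₋`. -/
def hminus (η : ℝ) : ℝ := F η - Gminus η

end GlacialCycles

section StrictConcave

variable {f : ℝ → ℝ} {s : Set ℝ} {x y z : ℝ}

theorem StrictConcaveOn.lt_apply_of_apply_eq (hf : StrictConcaveOn ℝ s f) (hx : x ∈ s)
    (hz : z ∈ s) (hxy : x < y) (hyz : y < z) (hfxz : f x = f z) : f x < f y := by
  have hy : y ∈ openSegment ℝ x z := by
    rw [openSegment_eq_Ioo (hxy.trans hyz)]
    exact ⟨hxy, hyz⟩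
  simpa [hfxz] using hf.lt_on_openSegment hx hz (hxy.trans hyz).ne hy

theorem StrictConcaveOn.eq_or_eq_of_apply_eq (hf : StrictConcaveOn ℝ s f) (hx : x ∈ s)
    (hy : y ∈ s) (hz : z ∈ s) (hxy : x < y) (hfxy : f x = f y) (hfxz : f x = f z) :
    z = x ∨ z = y := by
  rcases lt_trichotomy z x with hzx | rfl | hxz
  · linarith [hf.lt_apply_of_apply_eq hz hy hzx hxy (by linarith)]
  · exact Or.inl rfl
  rcases lt_trichotomy z y with hzy | rfl | hyz
  · linarith [hf.lt_apply_of_apply_eq hx hy hxz hzy hfxy]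
  · exact Or.inr rfl
  · linarith [hf.lt_apply_of_apply_eq hx hz hxy hyz hfxz]

theorem StrictConcaveOn.deriv_pos_of_apply_eq (hf : StrictConcaveOn ℝ s f) (hx : x ∈ s)
    (hy : y ∈ s) (hxy : x < y) (hfxy : f x = f y) (hfd : DifferentiableAt ℝ f x) :
    0 < deriv f x := by
  simpa [slope_def_field, hfxy] using hf.slope_lt_deriv hx hy hxy hfd

theorem StrictConcaveOn.deriv_neg_of_apply_eq (hf : StrictConcaveOn ℝ s f) (hx : x ∈ s)
    (hy : y ∈ s) (hxy : x < y) (hfxy : f x = f y) (hfd : DifferentiableAt ℝ f y) :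
    deriv f y < 0 := by
  simpa [slope_def_field, hfxy] using hf.deriv_lt_slope hx hy hxy hfd

end StrictConcave

namespace GlacialCycles

theorem hplus_eq_cubic : hplus = fun η : ℝ =>
    -247989/30875 * η^3 - 13143417/494000 * η^2 + 1276989/30875 * η - 4165461/494000 := by
  funext η
  simp only [hplus, F, Gplus, G, P2, p2, Lp, Qp, Ap, Bp, Cp, α0p, α1p, α2p, s2p]
  ring

theorem hasDerivAt_hplus (η : ℝ) :
    HasDerivAt hplus (-743967/30875 * η^2 - 13143417/247000 * η + 1276989/30875) η := by
  rw [hplus_eq_cubic]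
  refine (((((hasDerivAt_pow 3 η).const_mul (-247989/30875 : ℝ)).sub
      ((hasDerivAt_pow 2 η).const_mul (13143417/494000 : ℝ))).add
      ((hasDerivAt_id' η).const_mul (1276989/30875 : ℝ))).sub_const
      (4165461/494000 : ℝ)).congr_deriv ?_
  norm_num
  ring

theorem differentiable_hplus : Differentiable ℝ hplus :=
  fun η => (hasDerivAt_hplus η).differentiableAt

theorem strictConcaveOn_hplus : StrictConcaveOn ℝ (Set.Ici 0) hplus := by
  refine StrictAntiOn.strictConcaveOn_of_deriv (convex_Ici 0)
    differentiable_hplus.continuous.continuousOn ?_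
  rw [interior_Ici]
  intro a ha b _ hab
  simp only [(hasDerivAt_hplus _).deriv]
  nlinarith [Set.mem_Ioi.mp ha]

/-- With Table 1 parameters, `h₊ = F − G₊` has exactly two zeros in
`[0,1]`: `η*₊,u ∈ (0.2, 0.3)` with `h₊′(η*₊,u) > 0`, and `η*₊,s ∈ (0.9, 1)` with
`h₊′(η*₊,s) < 0`. -/
theorem hplus_has_exactly_two_zeros :
    ∃ ηu ηs : ℝ, ηu ∈ Set.Ioo (0.2:ℝ) 0.3 ∧ ηs ∈ Set.Ioo (0.9:ℝ) 1 ∧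
      hplus ηu = 0 ∧ hplus ηs = 0 ∧
      0 < deriv hplus ηu ∧ deriv hplus ηs < 0 ∧
      ∀ η ∈ Set.Icc (0:ℝ) 1, hplus η = 0 → η = ηu ∨ η = ηs := by
  have hcont : Continuous hplus := differentiable_hplus.continuous
  obtain ⟨h02, h03, h09, h1⟩ :
      hplus 0.2 < 0 ∧ 0 < hplus 0.3 ∧ 0 < hplus 0.9 ∧ hplus 1 < 0 := by
    simp only [hplus_eq_cubic]
    norm_num
  obtain ⟨ηu, hu, hu0⟩ := intermediate_value_Ioo (by norm_num) hcont.continuousOn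
    ⟨h02, h03⟩
  obtain ⟨ηs, hs, hs0⟩ := intermediate_value_Ioo' (by norm_num) hcont.continuousOn
    ⟨h1, h09⟩
  have hu_mem : ηu ∈ Set.Ici (0:ℝ) := Set.mem_Ici.mpr (by linarith [hu.1])
  have hs_mem : ηs ∈ Set.Ici (0:ℝ) := Set.mem_Ici.mpr (by linarith [hs.1])
  have hus : ηu < ηs := by linarith [hu.2, hs.1]
  have hzeros : hplus ηu = hplus ηs := hu0.trans hs0.symm
  refine ⟨ηu, ηs, hu, hs, hu0, hs0,
    strictConcaveOn_hplus.deriv_pos_of_apply_eq hu_mem hs_mem hus hzeros (differentiable_hplus _),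
    strictConcaveOn_hplus.deriv_neg_of_apply_eq hu_mem hs_mem hus hzeros (differentiable_hplus _),
    fun η hη hη0 => strictConcaveOn_hplus.eq_or_eq_of_apply_eq hu_mem hs_mem hη.1 hus hzeros
      (hu0.trans hη0.symm)⟩

end GlacialCycles
end
end

section
/- With Q=343, A=202, B=1.9, C=3.04, α₁=0.32, α₂=0.62, α₀=0.47, s₂=−0.482, L=Q/(B+C), the function h₋(η) = F(η) − G₋(η) has exactly two zeros η*₋,u < η*₋,s in [0,1], with h₋′(η*₋,u) > 0 and h₋′(η*₋,s) < 0. Moreover, denoting by η*₊,u < η*₊,s the two zeros of h₊ = F − G₊ in [0,1], one has η*₊,u < η*₋,u < η*₋,s < η*₊,s. -/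
/-!
After substituting the parameters, `h₋` is an explicit cubic. It is negative at `0` and `1`,
strictly increasing on `[0, 0.605]`, positive on `[0.605, 0.615]` and strictly decreasing on
`[0.615, 1]`, so it has exactly one zero on each monotone branch. Since `h₊ = h₋ + 4.5`, the zeros
of `h₊` are the points where `h₋ = -4.5 < 0`; they lie on the same two branches, further out.
-/

noncomputable section

namespace GlacialCycles

open Set

section Unimodal

variable {f : ℝ → ℝ} {p a b q c : ℝ}

theorem mem_Ico_or_mem_Ioc_of_apply_le (hmid : ∀ z ∈ Icc a b, c < f z) {x : ℝ}
    (hx : x ∈ Icc p q) (hfx : f x ≤ c) : x ∈ Ico p a ∨ x ∈ Ioc b q := by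
  by_cases hxa : x < a
  · exact Or.inl ⟨hx.1, hxa⟩
  by_cases hbx : b < x
  · exact Or.inr ⟨hbx, hx.2⟩
  exact absurd hfx (not_le.2 (hmid x ⟨not_lt.1 hxa, not_lt.1 hbx⟩))

theorem eq_or_eq_of_apply_eq (hmono : StrictMonoOn f (Icc p a))
    (hanti : StrictAntiOn f (Icc b q)) (hmid : ∀ z ∈ Icc a b, c < f z)
    {u s x : ℝ} (hu : u ∈ Icc p a) (hs : s ∈ Icc b q) (hfu : f u = c) (hfs : f s = c)
    (hx : x ∈ Icc p q) (hfx : f x = c) : x = u ∨ x = s := by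
  rcases mem_Ico_or_mem_Ioc_of_apply_le hmid hx hfx.le with hxl | hxr
  · exact Or.inl (hmono.injOn (Ico_subset_Icc_self hxl) hu (hfx.trans hfu.symm))
  · exact Or.inr (hanti.injOn (Ioc_subset_Icc_self hxr) hs (hfx.trans hfs.symm))

theorem lt_and_lt_of_apply_eq (hmono : StrictMonoOn f (Icc p a))
    (hanti : StrictAntiOn f (Icc b q)) (hmid : ∀ z ∈ Icc a b, c < f z)
    {x y : ℝ} (hx : x ∈ Icc p q) (hy : y ∈ Icc p q) (hxy : x < y) (hfxy : f x = f y)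
    (hfx : f x ≤ c) : x < a ∧ b < y := by
  rcases mem_Ico_or_mem_Ioc_of_apply_le hmid hx hfx with hxl | hxr <;>
    rcases mem_Ico_or_mem_Ioc_of_apply_le hmid hy (hfxy ▸ hfx) with hyl | hyr
  · exact absurd (hmono.injOn (Ico_subset_Icc_self hxl) (Ico_subset_Icc_self hyl) hfxy) hxy.ne
  · exact ⟨hxl.2, hyr.1⟩
  · exact absurd (hmono.injOn ⟨hx.1, hxy.le.trans hyl.2.le⟩ (Ico_subset_Icc_self hyl) hfxy)
      hxy.ne
  · exact absurd (hanti.injOn (Ioc_subset_Icc_self hxr) (Ioc_subset_Icc_self hyr) hfxy) hxy.ne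

end Unimodal

theorem hminus_eq_cubic (η : ℝ) : hminus η =
    (-247989/30875)*η^3 + (-13143417/494000)*η^2 + (1276989/30875)*η + (-6388461/494000) := by
  simp only [hminus, F, Gminus, G, P2, p2, Lp, Qp, Ap, Bp, Cp, α0p, α1p, α2p, s2p]
  ring

theorem hplus_eq_hminus_add (η : ℝ) : hplus η = hminus η + 9/2 := by
  simp only [hplus, hminus, Gplus, Gminus, G]
  ring

theorem hasDerivAt_hminus (x : ℝ) : HasDerivAt hminus
    (3*(-247989/30875)*x^2 + 2*(-13143417/494000)*x + 1276989/30875) x := by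
  rw [funext hminus_eq_cubic]
  refine (((((hasDerivAt_pow 3 x).const_mul _).add ((hasDerivAt_pow 2 x).const_mul _)).add
    ((hasDerivAt_id x).const_mul _)).add (hasDerivAt_const x _)).congr_deriv ?_
  push_cast
  ring

theorem continuous_hminus : Continuous hminus :=
  continuous_iff_continuousAt.2 fun x => (hasDerivAt_hminus x).continuousAt

theorem deriv_hminus_pos {x : ℝ} (hx : x ∈ Icc 0 (121/200)) : 0 < deriv hminus x := by
  rw [(hasDerivAt_hminus x).deriv]
  nlinarith [hx.1, hx.2]

theorem deriv_hminus_neg {x : ℝ} (hx : x ∈ Icc (123/200) 1) : deriv hminus x < 0 := by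
  rw [(hasDerivAt_hminus x).deriv]
  nlinarith [hx.1, hx.2]

theorem hminus_pos {x : ℝ} (hx : x ∈ Icc (121/200) (123/200)) : 0 < hminus x := by
  rw [hminus_eq_cubic]
  nlinarith [mul_nonneg (sub_nonneg.2 hx.1) (sub_nonneg.2 hx.2)]

theorem strictMonoOn_hminus : StrictMonoOn hminus (Icc 0 (121/200)) :=
  strictMonoOn_of_deriv_pos (convex_Icc _ _) continuous_hminus.continuousOn fun _ hx =>
    deriv_hminus_pos (interior_subset hx)

theorem strictAntiOn_hminus : StrictAntiOn hminus (Icc (123/200) 1) :=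
  strictAntiOn_of_deriv_neg (convex_Icc _ _) continuous_hminus.continuousOn fun _ hx =>
    deriv_hminus_neg (interior_subset hx)

theorem exists_hminus_eq_zero_left : ∃ u ∈ Ioo 0 (121/200), hminus u = 0 :=
  intermediate_value_Ioo (by norm_num) continuous_hminus.continuousOn
    ⟨by rw [hminus_eq_cubic]; norm_num, by rw [hminus_eq_cubic]; norm_num⟩

theorem exists_hminus_eq_zero_right : ∃ s ∈ Ioo (123/200) 1, hminus s = 0 :=
  intermediate_value_Ioo' (by norm_num) continuous_hminus.continuousOn
    ⟨by rw [hminus_eq_cubic]; norm_num, by rw [hminus_eq_cubic]; norm_num⟩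

/-- With Table 1 parameters, `h₋ = F − G₋` has exactly two zeros
`η*₋,u < η*₋,s` in `[0,1]`, with `h₋′(η*₋,u) > 0` and `h₋′(η*₋,s) < 0`; moreover, if
`η*₊,u < η*₊,s` denote the two zeros of `h₊ = F − G₊` in `[0,1]`, then
`η*₊,u < η*₋,u < η*₋,s < η*₊,s`. -/
theorem hminus_has_exactly_two_zeros_interlaced :
    ∃ ηmu ηms : ℝ, ηmu ∈ Set.Icc (0:ℝ) 1 ∧ ηms ∈ Set.Icc (0:ℝ) 1 ∧ ηmu < ηms ∧
      hminus ηmu = 0 ∧ hminus ηms = 0 ∧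
      0 < deriv hminus ηmu ∧ deriv hminus ηms < 0 ∧
      (∀ η ∈ Set.Icc (0:ℝ) 1, hminus η = 0 → η = ηmu ∨ η = ηms) ∧
      ∀ ηpu ηps : ℝ, ηpu ∈ Set.Icc (0:ℝ) 1 → ηps ∈ Set.Icc (0:ℝ) 1 → ηpu < ηps →
        hplus ηpu = 0 → hplus ηps = 0 →
        ηpu < ηmu ∧ ηms < ηps := by
  obtain ⟨u, hu, hu0⟩ := exists_hminus_eq_zero_left
  obtain ⟨s, hs, hs0⟩ := exists_hminus_eq_zero_right
  have hmid : ∀ z ∈ Icc (121/200 : ℝ) (123/200), 0 < hminus z := fun _ => hminus_pos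
  have hu' : u ∈ Icc 0 (121/200) := Ioo_subset_Icc_self hu
  have hs' : s ∈ Icc (123/200) 1 := Ioo_subset_Icc_self hs
  refine ⟨u, s, ⟨hu'.1, by linarith [hu'.2]⟩, ⟨by linarith [hs'.1], hs'.2⟩,
    by linarith [hu.2, hs.1], hu0, hs0, deriv_hminus_pos hu', deriv_hminus_neg hs',
    fun η hη hη0 => eq_or_eq_of_apply_eq strictMonoOn_hminus strictAntiOn_hminus hmid
      hu' hs' hu0 hs0 hη hη0, ?_⟩
  intro x y hx hy hxy hx0 hy0
  have hfx : hminus x = -(9/2) := by linarith [hplus_eq_hminus_add x]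
  have hfy : hminus y = -(9/2) := by linarith [hplus_eq_hminus_add y]
  obtain ⟨hxa, hby⟩ := lt_and_lt_of_apply_eq strictMonoOn_hminus strictAntiOn_hminus hmid
    hx hy hxy (hfx.trans hfy.symm) (by rw [hfx]; norm_num)
  exact ⟨(strictMonoOn_hminus.lt_iff_lt ⟨hx.1, hxa.le⟩ hu').1 (by linarith),
    (strictAntiOn_hminus.lt_iff_gt ⟨hby.le, hy.2⟩ hs').1 (by linarith)⟩

end GlacialCycles
end
end

section
/- Let τ, ρ, ε, a > 0 and b₁ > 0, and consider the vector field V₊(w,η,ξ) = (−τ(w−F(η)), ρ(w−G₊(η)), ε(b₁(η−ξ) − a(1−η))) with F and G₊ as in the quadratic approximation with Table 1 parameters. At every point, the Jacobian of V₊ is block lower-triangular with characteristic polynomial (λ + ε b₁)·det(λI − M(η)), where M(η) has rows (−τ, τ F′(η)) and (ρ, −ρ G₊′(η)); in particular −ε b₁ is an eigenvalue with eigenvector (0,0,1). Consequently, at the equilibrium Q*₊,s = (F(η*₊,s), η*₊,s, (1+a/b₁)η*₊,s − a/b₁), where η*₊,s is the zero of F − G₊ in (0.9,1) with (F−G₊)′(η*₊,s)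 < 0, all three eigenvalues of the Jacobian have negative real part (Q*₊,s is a sink), while at Q*₊,u = (F(η*₊,u), η*₊,u, (1+a/b₁)η*₊,u − a/b₁), where η*₊,u ∈ (0.2,0.3) has (F−G₊)′(η*₊,u) > 0, the Jacobian has exactly one eigenvalue with positive real part and two with negative real part (a saddle with two-dimensional stable manifold). -/
noncomputable section

namespace GlacialCycles

/-- The retreat vector field `V₊` on `ℝ³` (coordinates `(w, η, ξ) = (x 0, x 1, x 2)`). -/
def Vplus (τ ρ ε a b1 : ℝ) (x : Fin 3 → ℝ) : Fin 3 → ℝ :=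
  ![-τ * (x 0 - F (x 1)), ρ * (x 0 - Gplus (x 1)),
    ε * (b1 * (x 1 - x 2) - a * (1 - x 1))]

/-- The Jacobian matrix of `V₊`. -/
def Jplus (τ ρ ε a b1 η : ℝ) : Matrix (Fin 3) (Fin 3) ℝ :=
  !![-τ, τ * deriv F η, 0;
     ρ, -ρ * deriv Gplus η, 0;
     0, ε * (b1 + a), -ε * b1]

/-- The planar block `M(η)`. -/
def Mmat (τ ρ η : ℝ) : Matrix (Fin 2) (Fin 2) ℝ :=
  !![-τ, τ * deriv F η; ρ, -ρ * deriv Gplus η]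

/-! The `ξ`-equation does not feed back into `(w, η)`, so the Jacobian is block lower-triangular
and its spectrum is `-ε b₁` together with the spectrum of the planar block `M(η)`. Here
`tr M = -τ - ρ G₊'(η) < 0` for `η > 0`, and `det M = -τρ (F - G₊)'(η)`. A real `2 × 2` matrix has
either two real eigenvalues or a complex-conjugate pair; if `det M > 0` and `tr M < 0` both have
negative real part, while `det M < 0` rules out a conjugate pair and forces two real eigenvalues
of opposite signs. -/

end GlacialCycles

lemma Complex.im_eq_zero_or_re_eq_of_add_mul_real {μ₁ μ₂ : ℂ} {t d : ℝ}
    (hsum : μ₁ + μ₂ = t) (hprod : μ₁ * μ₂ = d) :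
    μ₂.im = -μ₁.im ∧ (μ₁.im = 0 ∨ μ₁.re = μ₂.re) := by
  have him : μ₁.im + μ₂.im = 0 := by simpa using congrArg Complex.im hsum
  have hprod_im : μ₁.re * μ₂.im + μ₁.im * μ₂.re = 0 := by simpa using congrArg Complex.im hprod
  refine ⟨by linarith, ?_⟩
  have : μ₁.im * (μ₂.re - μ₁.re) = 0 := by
    rw [show μ₂.im = -μ₁.im by linarith] at hprod_im; linarith
  rcases mul_eq_zero.1 this with h | h
  · exact .inl h
  · exact .inr (by linarith)

lemma Matrix.exists_roots_charpoly_map_complex (M : Matrix (Fin 2) (Fin 2) ℝ) :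
    ∃ μ₁ μ₂ : ℂ, (M.charpoly.map (algebraMap ℝ ℂ)).roots = {μ₁, μ₂} ∧
      μ₁ + μ₂ = M.trace ∧ μ₁ * μ₂ = M.det := by
  set N := M.map (algebraMap ℝ ℂ)
  have hN : N.charpoly = M.charpoly.map (algebraMap ℝ ℂ) := M.charpoly_map _
  have hcard : Multiset.card N.charpoly.roots = 2 := by
    rw [← (IsAlgClosed.splits N.charpoly).natDegree_eq_card_roots,
      Matrix.charpoly_natDegree_eq_dim, Fintype.card_fin]
  obtain ⟨μ₁, μ₂, hroots⟩ := Multiset.card_eq_two.1 hcard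
  refine ⟨μ₁, μ₂, hN ▸ hroots, ?_, ?_⟩
  · have := N.trace_eq_sum_roots_charpoly
    rw [hroots] at this
    simpa [N, Matrix.trace_fin_two] using this.symm
  · have := N.det_eq_prod_roots_charpoly
    rw [hroots] at this
    simpa [N, Matrix.det_fin_two] using this.symm

lemma Matrix.exists_roots_charpoly_map_complex_re_neg (M : Matrix (Fin 2) (Fin 2) ℝ)
    (htr : M.trace < 0) (hdet : 0 < M.det) :
    ∃ μ₁ μ₂ : ℂ, (M.charpoly.map (algebraMap ℝ ℂ)).roots = {μ₁, μ₂} ∧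
      μ₁.re < 0 ∧ μ₂.re < 0 := by
  obtain ⟨μ₁, μ₂, hroots, hsum, hprod⟩ := M.exists_roots_charpoly_map_complex
  have hre_sum : μ₁.re + μ₂.re = M.trace := by simpa using congrArg Complex.re hsum
  have hre_prod : μ₁.re * μ₂.re - μ₁.im * μ₂.im = M.det := by
    simpa using congrArg Complex.re hprod
  obtain ⟨him, hreal | hconj⟩ := Complex.im_eq_zero_or_re_eq_of_add_mul_real hsum hprod
  · rw [him, hreal] at hre_prod
    refine ⟨μ₁, μ₂, hroots, ?_, ?_⟩ <;> nlinarith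
  · exact ⟨μ₁, μ₂, hroots, by linarith, by linarith⟩

lemma Matrix.exists_roots_charpoly_map_complex_re_pos_re_neg (M : Matrix (Fin 2) (Fin 2) ℝ)
    (hdet : M.det < 0) :
    ∃ μ₁ μ₂ : ℂ, (M.charpoly.map (algebraMap ℝ ℂ)).roots = {μ₁, μ₂} ∧
      0 < μ₁.re ∧ μ₂.re < 0 := by
  obtain ⟨μ₁, μ₂, hroots, hsum, hprod⟩ := M.exists_roots_charpoly_map_complex
  have hre_prod : μ₁.re * μ₂.re - μ₁.im * μ₂.im = M.det := by
    simpa using congrArg Complex.re hprod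
  obtain ⟨him, hreal | hconj⟩ := Complex.im_eq_zero_or_re_eq_of_add_mul_real hsum hprod
  · rw [him, hreal] at hre_prod
    rcases mul_neg_iff.1 (by linarith : μ₁.re * μ₂.re < 0) with ⟨h₁, h₂⟩ | ⟨h₁, h₂⟩
    · exact ⟨μ₁, μ₂, hroots, h₁, h₂⟩
    · exact ⟨μ₂, μ₁, Multiset.pair_comm μ₁ μ₂ ▸ hroots, h₂, h₁⟩
  · rw [him, hconj] at hre_prod
    nlinarith [mul_self_nonneg μ₂.re, mul_self_nonneg μ₁.im]

namespace GlacialCycles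

open Polynomial

lemma differentiable_F : Differentiable ℝ F := by
  unfold F P2
  fun_prop

lemma hasDerivAt_Gplus (η : ℝ) : HasDerivAt Gplus (-Lp * s2p * (1 - α0p) * (3 * η)) η := by
  have h := (((hasDerivAt_pow 2 η).const_mul 3).sub_const 1).div_const 2
    |>.const_mul (-Lp * s2p * (1 - α0p)) |>.add_const (-10)
  exact h.congr_deriv (by push_cast; ring)

lemma deriv_Gplus_pos {η : ℝ} (hη : 0 < η) : 0 < deriv Gplus η := by
  have hcoef : (0 : ℝ) < -Lp * s2p * (1 - α0p) := by norm_num [Lp, s2p, α0p, Qp, Bp, Cp]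
  rw [(hasDerivAt_Gplus η).deriv]
  positivity

lemma deriv_F_sub_Gplus (η : ℝ) :
    deriv (fun η => F η - Gplus η) η = deriv F η - deriv Gplus η :=
  deriv_sub (differentiable_F η) (hasDerivAt_Gplus η).differentiableAt

lemma trace_Mmat_neg (τ ρ : ℝ) {η : ℝ} (hτ : 0 < τ) (hρ : 0 < ρ) (hη : 0 < η) :
    (Mmat τ ρ η).trace < 0 := by
  have := mul_pos hρ (deriv_Gplus_pos hη)
  simp only [Mmat, Matrix.trace_fin_two_of]
  linarith

lemma det_Mmat (τ ρ η : ℝ) :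
    (Mmat τ ρ η).det = -(τ * ρ) * deriv (fun η => F η - Gplus η) η := by
  rw [Mmat, Matrix.det_fin_two_of, deriv_F_sub_Gplus]
  ring

lemma Jplus_charpoly (τ ρ ε a b1 η : ℝ) :
    (Jplus τ ρ ε a b1 η).charpoly
      = (X + C (ε * b1)) * (Mmat τ ρ η).charpoly := by
  rw [Matrix.charpoly, Matrix.charpoly, Jplus, Mmat, Matrix.det_fin_three, Matrix.det_fin_two]
  simp only [neg_mul, Fin.isValue, Matrix.charmatrix_apply_eq, Matrix.of_apply, Matrix.cons_val',
    Matrix.cons_val_zero, Matrix.cons_val_fin_one, map_neg, sub_neg_eq_add, Matrix.cons_val_one,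
    map_mul, Matrix.cons_val, ne_eq, Fin.reduceEq, not_false_eq_true, Matrix.charmatrix_apply_ne,
    map_zero, neg_zero, mul_zero, map_add, mul_neg, zero_mul, sub_zero, zero_ne_one, one_ne_zero,
    neg_neg, add_zero]
  ring

lemma roots_Jplus_charpoly (τ ρ ε a b1 η : ℝ) :
    ((Jplus τ ρ ε a b1 η).charpoly.map (algebraMap ℝ ℂ)).roots
      = ((Mmat τ ρ η).charpoly.map (algebraMap ℝ ℂ)).roots + {((-(ε * b1) : ℝ) : ℂ)} := by
  have hne : ((X + C (ε * b1)) * (Mmat τ ρ η).charpoly).map (algebraMap ℝ ℂ) ≠ 0 :=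
    ((monic_X_add_C _).mul (Matrix.charpoly_monic _)).map _ |>.ne_zero
  rw [Polynomial.map_mul] at hne
  rw [Jplus_charpoly, Polynomial.map_mul, roots_mul hne,
    Polynomial.map_add, map_X, map_C, roots_X_add_C, add_comm]
  simp

lemma Jplus_mulVec_e3 (τ ρ ε a b1 η : ℝ) :
    (Jplus τ ρ ε a b1 η).mulVec ![0, 0, 1] = (-(ε * b1)) • ![0, 0, 1] := by
  ext i
  fin_cases i <;> simp [Jplus, Matrix.mulVec, dotProduct, Fin.sum_univ_three]

lemma hasFDerivAt_Vplus (τ ρ ε a b1 : ℝ) (x : Fin 3 → ℝ) :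
    HasFDerivAt (Vplus τ ρ ε a b1)
      (LinearMap.toContinuousLinearMap (Matrix.toLin' (Jplus τ ρ ε a b1 (x 1)))) x := by
  have hF : HasDerivAt F (deriv F (x 1)) (x 1) := (differentiable_F (x 1)).hasDerivAt
  have hG : HasDerivAt Gplus (deriv Gplus (x 1)) (x 1) :=
    (hasDerivAt_Gplus (x 1)).differentiableAt.hasDerivAt
  have hx₀ := hasFDerivAt_apply (𝕜 := ℝ) 0 x
  have hx₁ := hasFDerivAt_apply (𝕜 := ℝ) 1 x
  have hx₂ := hasFDerivAt_apply (𝕜 := ℝ) 2 x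
  rw [hasFDerivAt_pi']
  intro i
  fin_cases i <;> [
    refine ((hx₀.sub (hF.comp_hasFDerivAt x hx₁)).const_mul (-τ)).congr_fderiv ?_;
    refine ((hx₀.sub (hG.comp_hasFDerivAt x hx₁)).const_mul ρ).congr_fderiv ?_;
    refine ((((hx₁.sub hx₂).const_mul b1).sub
      (((hasFDerivAt_const 1 x).sub hx₁).const_mul a)).const_mul ε).congr_fderiv ?_] <;>
  · ext v
    simp [Matrix.toLin'_apply, dotProduct, Fin.sum_univ_three, Jplus]
    ring

theorem retreat_jacobian_eigenvalues_general
    (τ ρ ε a b1 : ℝ) (hτ : 0 < τ) (hρ : 0 < ρ) (hε : 0 < ε) (hb1 : 0 < b1)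
    (ηs : ℝ) (hηs : ηs ∈ Set.Ioo (0.9:ℝ) 1)
    (hηs_d : deriv (fun η => F η - Gplus η) ηs < 0)
    (ηu : ℝ)
    (hηu_d : 0 < deriv (fun η => F η - Gplus η) ηu) :
    (∀ x : Fin 3 → ℝ,
      HasFDerivAt (Vplus τ ρ ε a b1)
        (LinearMap.toContinuousLinearMap (Matrix.toLin' (Jplus τ ρ ε a b1 (x 1)))) x) ∧
    (∀ η : ℝ, (Jplus τ ρ ε a b1 η).charpoly
        = (Polynomial.X + Polynomial.C (ε * b1)) * (Mmat τ ρ η).charpoly) ∧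
    (∀ η : ℝ, (Jplus τ ρ ε a b1 η).mulVec ![0, 0, 1] = (-(ε * b1)) • ![0, 0, 1]) ∧
    (∃ μ₁ μ₂ μ₃ : ℂ,
      (((Jplus τ ρ ε a b1 ηs).charpoly).map (algebraMap ℝ ℂ)).roots = {μ₁, μ₂, μ₃} ∧
      μ₁.re < 0 ∧ μ₂.re < 0 ∧ μ₃.re < 0) ∧
    (∃ μ₁ μ₂ μ₃ : ℂ,
      (((Jplus τ ρ ε a b1 ηu).charpoly).map (algebraMap ℝ ℂ)).roots = {μ₁, μ₂, μ₃} ∧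
      0 < μ₁.re ∧ μ₂.re < 0 ∧ μ₃.re < 0) := by
  have hεb1 : ((-(ε * b1) : ℝ) : ℂ).re < 0 := by simpa using mul_pos hε hb1
  refine ⟨hasFDerivAt_Vplus τ ρ ε a b1, Jplus_charpoly τ ρ ε a b1, Jplus_mulVec_e3 τ ρ ε a b1,
    ?_, ?_⟩
  · have htr := trace_Mmat_neg τ ρ hτ hρ (lt_trans (by norm_num) hηs.1)
    have hdet : 0 < (Mmat τ ρ ηs).det := by
      rw [det_Mmat]; exact mul_pos_of_neg_of_neg (by simpa using mul_pos hτ hρ) hηs_d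
    obtain ⟨μ₁, μ₂, hroots, h₁, h₂⟩ :=
      (Mmat τ ρ ηs).exists_roots_charpoly_map_complex_re_neg htr hdet
    exact ⟨μ₁, μ₂, _, by simp [roots_Jplus_charpoly, hroots], h₁, h₂, hεb1⟩
  · have hdet : (Mmat τ ρ ηu).det < 0 := by
      rw [det_Mmat]; exact mul_neg_of_neg_of_pos (by simpa using mul_pos hτ hρ) hηu_d
    obtain ⟨μ₁, μ₂, hroots, h₁, h₂⟩ :=
      (Mmat τ ρ ηu).exists_roots_charpoly_map_complex_re_pos_re_neg hdet
    exact ⟨μ₁, μ₂, _, by simp [roots_Jplus_charpoly, hroots], h₁, h₂, hεb1⟩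

/-- The Jacobian of `V₊` is block lower-triangular with characteristic
polynomial `(λ + ε b₁)·det(λ I − M(η))` and eigenvector `(0,0,1)` for `−ε b₁`; at the
equilibrium over `η*₊,s` (larger zero of `F − G₊`, where `(F−G₊)′ < 0`) all three
eigenvalues have negative real part, and at the equilibrium over `η*₊,u ∈ (0.2,0.3)`
(where `(F−G₊)′ > 0`) exactly one eigenvalue has positive real part and two have
negative real part. -/
theorem retreat_jacobian_eigenvalues
    (τ ρ ε a b1 : ℝ) (hτ : 0 < τ) (hρ : 0 < ρ) (hε : 0 < ε) (ha : 0 < a) (hb1 : 0 < b1)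
    (ηs : ℝ) (hηs : ηs ∈ Set.Ioo (0.9:ℝ) 1) (hηs_eq : F ηs = Gplus ηs)
    (hηs_d : deriv (fun η => F η - Gplus η) ηs < 0)
    (ηu : ℝ) (hηu : ηu ∈ Set.Ioo (0.2:ℝ) 0.3) (hηu_eq : F ηu = Gplus ηu)
    (hηu_d : 0 < deriv (fun η => F η - Gplus η) ηu) :
    (∀ x : Fin 3 → ℝ,
      HasFDerivAt (Vplus τ ρ ε a b1)
        (LinearMap.toContinuousLinearMap (Matrix.toLin' (Jplus τ ρ ε a b1 (x 1)))) x) ∧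
    (∀ η : ℝ, (Jplus τ ρ ε a b1 η).charpoly
        = (Polynomial.X + Polynomial.C (ε * b1)) * (Mmat τ ρ η).charpoly) ∧
    (∀ η : ℝ, (Jplus τ ρ ε a b1 η).mulVec ![0, 0, 1] = (-(ε * b1)) • ![0, 0, 1]) ∧
    (∃ μ₁ μ₂ μ₃ : ℂ,
      (((Jplus τ ρ ε a b1 ηs).charpoly).map (algebraMap ℝ ℂ)).roots = {μ₁, μ₂, μ₃} ∧
      μ₁.re < 0 ∧ μ₂.re < 0 ∧ μ₃.re < 0) ∧
    (∃ μ₁ μ₂ μ₃ : ℂ,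
      (((Jplus τ ρ ε a b1 ηu).charpoly).map (algebraMap ℝ ℂ)).roots = {μ₁, μ₂, μ₃} ∧
      0 < μ₁.re ∧ μ₂.re < 0 ∧ μ₃.re < 0) :=
  retreat_jacobian_eigenvalues_general τ ρ ε a b1 hτ hρ hε hb1 ηs hηs hηs_d ηu hηu_d

end GlacialCycles
end
end

section
/- Let a > 0, 0 < b₀ < b < b₁, ρ > 0, ε > 0, and γ(η) = (1+a/b)η − a/b. Then for every η ∈ [0,1): (i) (1+a/b₁)η − a/b₁ > γ(η) and (1+a/b₀)η − a/b₀ < γ(η); and (ii) G₊(η) < g₊(η) and G₋(η) > g₋(η). Consequently (with Table 1 parameters): the sink Q*₊,s = (F(η*₊,s), η*₊,s, (1+a/b₁)η*₊,s − a/b₁) of the retreat vector field V₊ lies in S₋ = {ξ > γ(η)}, the sink Q*₋,s = (F(η*₋,s), η*₋,s, (1+a/b₀)η*₋,s − a/b₀) of the advance vector field V₋ lies in S₊ = {ξ < γ(η)} (both are virtual equilibria), and the points Z*₊ = (G₊(η*₊,s), η*₊,s, γ(η*₊,s)) and Z*₋ = (G₋(η*₋,s), η*₋,s, γ(η*₋,s))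 lie in Σ₊ and Σ₋ respectively. -/
noncomputable section

namespace GlacialCycles

/-- For `a > 0`, `0 < b₀ < b < b₁`, `ρ, ε > 0` and `γ(η) = (1+a/b)η − a/b`:
(i) for `η ∈ [0,1)`, `(1+a/b₁)η − a/b₁ > γ(η)` and `(1+a/b₀)η − a/b₀ < γ(η)`;
(ii) for `η ∈ [0,1)`, `G₊(η) < g₊(η)` and `G₋(η) > g₋(η)`.
Consequently the sink `Q*₊,s = (F(η*₊,s), η*₊,s, (1+a/b₁)η*₊,s − a/b₁)` of `V₊` lies in
`S₋ = {ξ > γ(η)}`, the sink `Q*₋,s` of `V₋` lies in `S₊ = {ξ < γ(η)}` (both virtual),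
and `Z*₊ = (G₊(η*₊,s), η*₊,s, γ(η*₊,s)) ∈ Σ₊`, `Z*₋ = (G₋(η*₋,s), η*₋,s, γ(η*₋,s)) ∈ Σ₋`,
i.e. `G₊(η*₊,s) < g₊(η*₊,s)` and `G₋(η*₋,s) > g₋(η*₋,s)`. -/
theorem virtual_equilibria
    (a b0 b b1 ρ ε : ℝ)
    (ha : 0 < a) (hb0 : 0 < b0) (hb0b : b0 < b) (hbb1 : b < b1)
    (hρ : 0 < ρ) (hε : 0 < ε)
    (γ gp gm : ℝ → ℝ)
    (hγ : ∀ η, γ η = (1 + a/b)*η - a/b)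
    (hgp : ∀ η, gp η = Gplus η + ε*a*(1-η)*(b1-b)/(ρ*(a+b)))
    (hgm : ∀ η, gm η = Gminus η + ε*a*(1-η)*(b0-b)/(ρ*(a+b)))
    -- η*₊,s : the larger zero of F − G₊ in [0,1], lying in (0.9,1)
    (ηps : ℝ) (hηps_mem : ηps ∈ Set.Ioo (0.9:ℝ) 1) (hηps_eq : F ηps = Gplus ηps)
    (hηps_max : ∀ η' ∈ Set.Icc (0:ℝ) 1, F η' = Gplus η' → η' ≤ ηps)
    -- η*₋,s : the larger zero of F − G₋ in [0,1), lying below 1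
    (ηms : ℝ) (hηms_mem : ηms ∈ Set.Ico (0:ℝ) 1) (hηms_eq : F ηms = Gminus ηms)
    (hηms_max : ∀ η' ∈ Set.Icc (0:ℝ) 1, F η' = Gminus η' → η' ≤ ηms) :
    (∀ η ∈ Set.Ico (0:ℝ) 1,
      (1 + a/b1)*η - a/b1 > γ η ∧ (1 + a/b0)*η - a/b0 < γ η) ∧
    (∀ η ∈ Set.Ico (0:ℝ) 1, Gplus η < gp η ∧ gm η < Gminus η) ∧
    -- Q*₊,s ∈ S₋ (virtual equilibrium of V₊)
    ((1 + a/b1)*ηps - a/b1 > γ ηps) ∧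
    -- Q*₋,s ∈ S₊ (virtual equilibrium of V₋)
    ((1 + a/b0)*ηms - a/b0 < γ ηms) ∧
    -- Z*₊ ∈ Σ₊ and Z*₋ ∈ Σ₋
    (Gplus ηps < gp ηps) ∧ (gm ηms < Gminus ηms) := by
  have hb : 0 < b := hb0.trans hb0b
  have hb1 : 0 < b1 := hb.trans hbb1
  have hab : 0 < a + b := by linarith
  have key1 : ∀ η ∈ Set.Ico (0:ℝ) 1,
      (1 + a/b1)*η - a/b1 > γ η ∧ (1 + a/b0)*η - a/b0 < γ η := by
    intro η hη
    obtain ⟨h0, h1⟩ := hη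
    rw [hγ]
    constructor
    · have h : (1 + a/b1)*η - a/b1 - ((1 + a/b)*η - a/b)
          = a*(1-η)*(b1-b)/(b*b1) := by field_simp; ring
      nlinarith [mul_pos (mul_pos (mul_pos ha (by linarith : (0:ℝ) < 1-η))
        (by linarith : (0:ℝ) < b1-b)) (mul_pos hb hb1),
        div_pos (mul_pos (mul_pos ha (by linarith : (0:ℝ) < 1-η))
        (by linarith : (0:ℝ) < b1-b)) (mul_pos hb hb1)]
    · have h : ((1 + a/b)*η - a/b) - ((1 + a/b0)*η - a/b0)
          = a*(1-η)*(b-b0)/(b0*b) := by field_simp; ring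
      nlinarith [div_pos (mul_pos (mul_pos ha (by linarith : (0:ℝ) < 1-η))
        (by linarith : (0:ℝ) < b-b0)) (mul_pos hb0 hb)]
  have key2 : ∀ η ∈ Set.Ico (0:ℝ) 1, Gplus η < gp η ∧ gm η < Gminus η := by
    intro η hη
    obtain ⟨h0, h1⟩ := hη
    constructor
    · rw [hgp]
      have : 0 < ε*a*(1-η)*(b1-b)/(ρ*(a+b)) :=
        div_pos (mul_pos (mul_pos (mul_pos hε ha) (by linarith : (0:ℝ) < 1-η))
          (by linarith : (0:ℝ) < b1-b)) (mul_pos hρ hab)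
      linarith
    · rw [hgm]
      have : ε*a*(1-η)*(b0-b)/(ρ*(a+b)) < 0 := by
        apply div_neg_of_neg_of_pos _ (mul_pos hρ hab)
        have : 0 < ε*a*(1-η)*(b-b0) := by
          apply mul_pos _ (by linarith)
          exact mul_pos (mul_pos hε ha) (by linarith)
        nlinarith
      linarith
  have hps_mem : ηps ∈ Set.Ico (0:ℝ) 1 :=
    ⟨le_of_lt (lt_trans (by norm_num) hηps_mem.1), hηps_mem.2⟩
  refine ⟨key1, key2, (key1 ηps hps_mem).1, (key1 ηms hηms_mem).2,
    (key2 ηps hps_mem).1, (key2 ηms hηms_mem).2⟩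

end GlacialCycles
end
end

section
/- Let a, b, b₁, τ, ρ, ε > 0 and let F, G₊ be arbitrary real functions. For every point x = (w, η, γ(η)) on the plane Σ, the vector field V₊(w,η,ξ) = (−τ(w−F(η)), ρ(w−G₊(η)), ε(b₁(η−ξ) − a(1−η))) satisfies ⟨V₊(x), N⟩ = ρ·((a+b)/b)·(w − g₊(η)), where N = (0, 1+a/b, −1) and g₊(η) = G₊(η) + εa(1−η)(b₁−b)/(ρ(a+b)). In particular, V₊ is tangent to Σ at x if and only if w = g₊(η) (the parabola Λ₊), ⟨V₊(x), N⟩ < 0 when w < g₊(η), and ⟨V₊(x), N⟩ > 0 when w > g₊(η). -/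
/-- For any point `x = (w, η, γ(η))` on the discontinuity plane `Σ`
(with `γ(η) = (1+a/b)η − a/b` and normal `N = (0, 1+a/b, −1)`), the vector field
`V₊(w,η,ξ) = (−τ(w−F(η)), ρ(w−G₊(η)), ε(b₁(η−ξ) − a(1−η)))` satisfies
`⟨V₊(x), N⟩ = ρ((a+b)/b)(w − g₊(η))` where `g₊(η) = G₊(η) + εa(1−η)(b₁−b)/(ρ(a+b))`.
In particular `V₊` is tangent to `Σ` at `x` iff `w = g₊(η)` (the parabola `Λ₊`),
`⟨V₊(x), N⟩ < 0` when `w < g₊(η)`, and `⟨V₊(x), N⟩ > 0` when `w > g₊(η)`. -/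
theorem Vplus_inner_product_with_normal
    (a b b1 τ ρ ε : ℝ)
    (ha : 0 < a) (hb : 0 < b) (hb1 : 0 < b1) (hτ : 0 < τ) (hρ : 0 < ρ) (hε : 0 < ε)
    (F Gplus : ℝ → ℝ) :
    ∀ w η : ℝ,
      -- ξ-coordinate on Σ
      let ξ : ℝ := (1 + a/b)*η - a/b
      -- the three components of V₊ at x = (w, η, ξ)
      let V₁ : ℝ := -τ * (w - F η)
      let V₂ : ℝ := ρ * (w - Gplus η)
      let V₃ : ℝ := ε * (b1 * (η - ξ) - a * (1 - η))
      -- ⟨V₊(x), N⟩ with N = (0, 1+a/b, −1)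
      let dot : ℝ := 0 * V₁ + (1 + a/b) * V₂ + (-1) * V₃
      let gp : ℝ := Gplus η + ε*a*(1-η)*(b1-b)/(ρ*(a+b))
      dot = ρ * ((a+b)/b) * (w - gp) ∧
      (dot = 0 ↔ w = gp) ∧
      (w < gp → dot < 0) ∧
      (gp < w → 0 < dot) := by
  intro w η ξ V₁ V₂ V₃ dot gp
  have hab : 0 < a + b := by linarith
  have hc : 0 < ρ * ((a+b)/b) := by positivity
  have key : dot = ρ * ((a+b)/b) * (w - gp) := by
    show 0 * V₁ + (1 + a/b) * V₂ + (-1) * V₃ = _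
    show 0 * (-τ * (w - F η)) + (1 + a/b) * (ρ * (w - Gplus η)) +
      (-1) * (ε * (b1 * (η - ((1 + a/b)*η - a/b)) - a * (1 - η)))
      = ρ * ((a+b)/b) * (w - (Gplus η + ε*a*(1-η)*(b1-b)/(ρ*(a+b))))
    field_simp
    ring
  refine ⟨key, ?_, ?_, ?_⟩
  · rw [key]
    constructor
    · intro h
      rcases mul_eq_zero.mp h with h | h
      · exact absurd h hc.ne'
      · linarith
    · intro h; rw [h]; ring
  · intro h; rw [key]; exact mul_neg_of_pos_of_neg hc (by linarith)
  · intro h; rw [key]; exact mul_pos hc (by linarith)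
end

section
/- Let a > 0, 0 < b₀ < b < b₁, τ, ρ, ε > 0 and let F, G₋, G₊ be real functions. If x = (w, η, γ(η)) ∈ Σ satisfies g₊(η) < w < g₋(η), then ⟨V₊(x), N⟩ > 0 and ⟨V₋(x), N⟩ < 0; that is, V₊(x) points into S₊ and V₋(x) points into S₋, so the set Σ^SL = {(w,η,ξ) ∈ Σ : g₊(η) < w < g₋(η)} is a repelling sliding region of the Filippov system. -/
/-- If `x = (w, η, γ(η)) ∈ Σ` satisfies `g₊(η) < w < g₋(η)`, then
`⟨V₊(x), N⟩ > 0` and `⟨V₋(x), N⟩ < 0` (with `N = (0, 1+a/b, −1)`); that is, `V₊(x)`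
points into `S₊` and `V₋(x)` points into `S₋`, so
`Σ^SL = {(w,η,ξ) ∈ Σ : g₊(η) < w < g₋(η)}` is a repelling sliding region of the
Filippov system. -/
theorem repelling_sliding_region
    (a b0 b b1 τ ρ ε : ℝ)
    (ha : 0 < a) (hb0 : 0 < b0) (hb0b : b0 < b) (hbb1 : b < b1)
    (hτ : 0 < τ) (hρ : 0 < ρ) (hε : 0 < ε)
    (F Gminus Gplus : ℝ → ℝ) :
    ∀ w η : ℝ,
      let ξ : ℝ := (1 + a/b)*η - a/b
      let gp : ℝ := Gplus η + ε*a*(1-η)*(b1-b)/(ρ*(a+b))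
      let gm : ℝ := Gminus η + ε*a*(1-η)*(b0-b)/(ρ*(a+b))
      -- ⟨V₊(x), N⟩ and ⟨V₋(x), N⟩ at x = (w, η, γ(η)), N = (0, 1+a/b, −1)
      let dotP : ℝ := 0 * (-τ * (w - F η)) + (1 + a/b) * (ρ * (w - Gplus η))
        + (-1) * (ε * (b1 * (η - ξ) - a * (1 - η)))
      let dotM : ℝ := 0 * (-τ * (w - F η)) + (1 + a/b) * (ρ * (w - Gminus η))
        + (-1) * (ε * (b0 * (η - ξ) - a * (1 - η)))
      gp < w → w < gm → 0 < dotP ∧ dotM < 0 := by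
  intro w η ξ gp gm dotP dotM h1 h2
  have hb : (0:ℝ) < b := hb0.trans hb0b
  have hab : (0:ℝ) < a + b := by linarith
  have hρab : (0:ℝ) < ρ * (a + b) := by positivity
  have h1'' : ε*a*(1-η)*(b1-b)/(ρ*(a+b)) < w - Gplus η := by
    have : Gplus η + ε*a*(1-η)*(b1-b)/(ρ*(a+b)) < w := h1
    linarith
  have h2'' : w - Gminus η < ε*a*(1-η)*(b0-b)/(ρ*(a+b)) := by
    have : w < Gminus η + ε*a*(1-η)*(b0-b)/(ρ*(a+b)) := h2
    linarith
  have h1' : ε*a*(1-η)*(b1-b) < (w - Gplus η) * (ρ*(a+b)) :=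
    (div_lt_iff₀ hρab).mp h1''
  have h2' : (w - Gminus η) * (ρ*(a+b)) < ε*a*(1-η)*(b0-b) :=
    (lt_div_iff₀ hρab).mp h2''
  constructor
  · show (0:ℝ) < 0 * (-τ * (w - F η)) + (1 + a/b) * (ρ * (w - Gplus η))
      + (-1) * (ε * (b1 * (η - ((1 + a/b)*η - a/b)) - a * (1 - η)))
    have e1 : 0 * (-τ * (w - F η)) + (1 + a/b) * (ρ * (w - Gplus η))
        + (-1) * (ε * (b1 * (η - ((1 + a/b)*η - a/b)) - a * (1 - η)))
        = ((w - Gplus η) * (ρ*(a+b)) - ε*a*(1-η)*(b1-b)) / b := by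
      field_simp
      ring
    rw [e1]
    exact div_pos (by linarith) hb
  · show 0 * (-τ * (w - F η)) + (1 + a/b) * (ρ * (w - Gminus η))
      + (-1) * (ε * (b0 * (η - ((1 + a/b)*η - a/b)) - a * (1 - η))) < 0
    have e2 : 0 * (-τ * (w - F η)) + (1 + a/b) * (ρ * (w - Gminus η))
        + (-1) * (ε * (b0 * (η - ((1 + a/b)*η - a/b)) - a * (1 - η)))
        = ((w - Gminus η) * (ρ*(a+b)) - ε*a*(1-η)*(b0-b)) / b := by
      field_simp
      ring
    rw [e2]
    exact div_neg_of_neg_of_pos (by linarith) hb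
end

section
/- Let a > 0, 0 < b₀ < b < b₁, ρ, ε > 0, and let T_c^− > T_c^+ be real numbers with G₋(η) = G₊(η) + (T_c^− − T_c^+). Then for all η: g₋(η) − g₊(η) = (T_c^− − T_c^+) − εa(1−η)(b₁−b₀)/(ρ(a+b)), and g₋(η) = g₊(η) if and only if η = 1 − (T_c^− − T_c^+)ρ(a+b)/(εa(b₁−b₀)). Moreover, if ε < (T_c^− − T_c^+)ρ(a+b)/(a(b₁−b₀)), then this η-value is strictly negative and g₊(η) < g₋(η) for every η ∈ [0,1]; hence the tangency curves Λ₊ and Λ₋ do not intersect in the state space. -/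
/-- With `G₋ = G₊ + (T_c⁻ − T_c⁺)`,
`g₋(η) − g₊(η) = (T_c⁻ − T_c⁺) − εa(1−η)(b₁−b₀)/(ρ(a+b))`, with equality `g₋ = g₊`
exactly at `η = 1 − (T_c⁻ − T_c⁺)ρ(a+b)/(εa(b₁−b₀))`; if
`ε < (T_c⁻ − T_c⁺)ρ(a+b)/(a(b₁−b₀))` then this `η`-value is strictly negative and
`g₊(η) < g₋(η)` for all `η ∈ [0,1]`, so the tangency curves `Λ₊` and `Λ₋` do not
intersect in the state space. -/
theorem tangency_curves_disjoint
    (a b0 b b1 ρ ε : ℝ)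
    (ha : 0 < a) (hb0 : 0 < b0) (hb0b : b0 < b) (hbb1 : b < b1)
    (hρ : 0 < ρ) (hε : 0 < ε)
    (Tcm Tcp : ℝ) (hT : Tcp < Tcm)
    (Gplus Gminus gp gm : ℝ → ℝ)
    (hGm : ∀ η, Gminus η = Gplus η + (Tcm - Tcp))
    (hgp : ∀ η, gp η = Gplus η + ε*a*(1-η)*(b1-b)/(ρ*(a+b)))
    (hgm : ∀ η, gm η = Gminus η + ε*a*(1-η)*(b0-b)/(ρ*(a+b))) :
    (∀ η : ℝ, gm η - gp η = (Tcm - Tcp) - ε*a*(1-η)*(b1-b0)/(ρ*(a+b))) ∧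
    (∀ η : ℝ, gm η = gp η ↔ η = 1 - (Tcm - Tcp)*ρ*(a+b)/(ε*a*(b1-b0))) ∧
    (ε < (Tcm - Tcp)*ρ*(a+b)/(a*(b1-b0)) →
      (1 - (Tcm - Tcp)*ρ*(a+b)/(ε*a*(b1-b0)) < 0 ∧
       ∀ η ∈ Set.Icc (0:ℝ) 1, gp η < gm η)) := by
  have hab : 0 < a + b := by linarith
  have hden : ρ * (a + b) ≠ 0 := by positivity
  have hb10 : 0 < b1 - b0 := by linarith
  have hden2 : ε * a * (b1 - b0) ≠ 0 := by positivity
  have hdiff : ∀ η : ℝ, gm η - gp η = (Tcm - Tcp) - ε*a*(1-η)*(b1-b0)/(ρ*(a+b)) := by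
    intro η
    rw [hgm, hgp, hGm]
    field_simp
    ring
  refine ⟨hdiff, ?_, ?_⟩
  · intro η
    rw [← sub_eq_zero, hdiff η, sub_eq_zero]
    constructor
    · intro h
      have h' := (eq_div_iff hden).mp h
      field_simp
      nlinarith [h']
    · intro h
      subst h
      field_simp
      ring
  · intro hεlt
    have key : ε * a * (b1 - b0) < (Tcm - Tcp) * ρ * (a + b) := by
      have h2 := (lt_div_iff₀ (by positivity : (0:ℝ) < a * (b1 - b0))).mp hεlt
      nlinarith
    have hneg : 1 - (Tcm - Tcp)*ρ*(a+b)/(ε*a*(b1-b0)) < 0 := by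
      have : (1:ℝ) < (Tcm - Tcp)*ρ*(a+b)/(ε*a*(b1-b0)) := by
        rw [lt_div_iff₀ (by positivity)]
        linarith
      linarith
    refine ⟨hneg, ?_⟩
    intro η hη
    obtain ⟨h0, h1⟩ := hη
    have hgt : gm η - gp η > 0 := by
      rw [hdiff η]
      have hle2 : ε*a*(1-η)*(b1-b0) ≤ ε*a*(b1-b0) := by nlinarith [mul_nonneg (mul_nonneg (mul_nonneg hε.le ha.le) h0) hb10.le]
      have hle3 : ε*a*(1-η)*(b1-b0)/(ρ*(a+b)) ≤ ε*a*(b1-b0)/(ρ*(a+b)) :=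
        div_le_div_of_nonneg_right hle2 (by positivity) |>.trans_eq rfl
      have hlt : ε*a*(b1-b0)/(ρ*(a+b)) < Tcm - Tcp := by
        rw [div_lt_iff₀ (by positivity)]
        nlinarith
      linarith
    linarith
end

section
/- Let ε > 0, b₁ > 0 and a ∈ ℝ. Suppose η : [0,∞) → ℝ is continuous with η(t) → η* as t → ∞, and ξ : [0,∞) → ℝ is differentiable with ξ′(t) = ε(b₁(η(t) − ξ(t)) − a(1 − η(t))) for all t ≥ 0. Then ξ(t) → (1 + a/b₁)η* − a/b₁ as t → ∞. Consequently, any solution (w(t), η(t), ξ(t)) of the retreat vector field V₊ whose planar component (w(t), η(t)) converges to the planar sink (w*₊,s, η*₊,s) converges to the equilibrium Q*₊,s = (w*₊,s, η*₊,s, (1+a/b₁)η*₊,s − a/b₁); the analogous statement holds for V₋ with b₀ in place of b₁. -/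
/-!
Writing `L = (1 + a/b₁)η* − a/b₁`, the deviation `y = ξ − L` solves the linear equation
`y′ = −εb₁ y + r` with forcing `r = ε(b₁ + a)(η − η*) → 0`. Once `r ≤ εb₁δ`, the function
`e^{εb₁t}(y − δ)` is nonincreasing, so `y ≤ δ + O(e^{−εb₁t})`; the same argument for `−y`
gives `y → 0`. For `V₊` and `V₋` it is applied to the `η`-component of the converging
planar solution.
-/

open Filter Set Topology Real

theorem le_of_hasDerivAt_linear_of_forcing_le {k δ T : ℝ} {y r : ℝ → ℝ}
    (hy : ∀ t ≥ T, HasDerivAt y (-k * y t + r t) t) (hr : ∀ t ≥ T, r t ≤ k * δ) :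
    ∀ t ≥ T, y t ≤ δ + exp (-(k * (t - T))) * (y T - δ) := by
  set p : ℝ → ℝ := fun t ↦ exp (k * t) * (y t - δ)
  have hp : ∀ t ≥ T, HasDerivAt p (exp (k * t) * (r t - k * δ)) t := fun t ht ↦
    (((hasDerivAt_id t).const_mul k).exp.mul ((hy t ht).sub_const δ)).congr_deriv
      (by simp only [id]; ring)
  have hp_anti : AntitoneOn p (Ici T) := by
    refine antitoneOn_of_hasDerivWithinAt_nonpos (f' := fun t ↦ exp (k * t) * (r t - k * δ))
      (convex_Ici T)
      (fun t ht ↦ (hp t ht).continuousAt.continuousWithinAt) (fun t ht ↦ ?_) (fun t ht ↦ ?_)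
    · rw [interior_Ici] at ht
      exact (hp t (ht.le)).hasDerivWithinAt
    · rw [interior_Ici] at ht
      exact mul_nonpos_of_nonneg_of_nonpos (exp_pos _).le (by linarith [hr t (ht.le)])
  intro t ht
  have hpt : p t ≤ p T := hp_anti self_mem_Ici ht ht
  have : y t - δ ≤ exp (-(k * (t - T))) * (y T - δ) := calc
    y t - δ = exp (-(k * t)) * p t := by simp only [p, ← mul_assoc, ← exp_add]; simp
    _ ≤ exp (-(k * t)) * p T := mul_le_mul_of_nonneg_left hpt (exp_pos _).le
    _ = exp (-(k * (t - T))) * (y T - δ) := by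
      simp only [p, ← mul_assoc, ← exp_add]; ring_nf
  linarith

theorem eventually_lt_of_hasDerivAt_linear {k : ℝ} (hk : 0 < k) {y r : ℝ → ℝ}
    (hy : ∀ᶠ t in atTop, HasDerivAt y (-k * y t + r t) t) (hr : Tendsto r atTop (𝓝 0))
    {b : ℝ} (hb : 0 < b) : ∀ᶠ t in atTop, y t < b := by
  obtain ⟨T, hT⟩ := eventually_atTop.1
    (hy.and (hr.eventually_le_const (mul_pos hk (half_pos hb))))
  have hbound := le_of_hasDerivAt_linear_of_forcing_le (fun t ht ↦ (hT t ht).1)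
    (fun t ht ↦ (hT t ht).2)
  have hdecay : Tendsto (fun t ↦ exp (-(k * (t - T)))) atTop (𝓝 0) :=
    tendsto_exp_neg_atTop_nhds_zero.comp
      ((tendsto_atTop_add_const_right _ (-T) tendsto_id).const_mul_atTop hk)
  have htail : Tendsto (fun t ↦ b / 2 + exp (-(k * (t - T))) * (y T - b / 2)) atTop
      (𝓝 (b / 2)) := by
    simpa using (hdecay.mul_const (y T - b / 2)).const_add (b / 2)
  filter_upwards [htail.eventually_lt_const (half_lt_self hb), eventually_ge_atTop T]
    with t htail_lt ht
  exact (hbound t ht).trans_lt htail_lt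

theorem tendsto_zero_of_hasDerivAt_linear {k : ℝ} (hk : 0 < k) {y r : ℝ → ℝ}
    (hy : ∀ᶠ t in atTop, HasDerivAt y (-k * y t + r t) t) (hr : Tendsto r atTop (𝓝 0)) :
    Tendsto y atTop (𝓝 0) := by
  refine tendsto_order.2
    ⟨fun a ha ↦ ?_, fun b hb ↦ eventually_lt_of_hasDerivAt_linear hk hy hr hb⟩
  have hy_neg : ∀ᶠ t in atTop, HasDerivAt (fun t ↦ -y t) (-k * -y t + -r t) t :=
    hy.mono fun t h ↦ h.neg.congr_deriv (by ring)
  have hr_neg : Tendsto (fun t ↦ -r t) atTop (𝓝 0) := by simpa using hr.neg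
  filter_upwards [eventually_lt_of_hasDerivAt_linear hk hy_neg hr_neg (neg_pos.2 ha)] with t ht
  simpa using ht

theorem tendsto_of_hasDerivAt_iceline {ε b a ηstar : ℝ} (hε : 0 < ε) (hb : 0 < b)
    {η ξ : ℝ → ℝ} (hη : Tendsto η atTop (𝓝 ηstar))
    (hξ : ∀ᶠ t in atTop, HasDerivAt ξ (ε * (b * (η t - ξ t) - a * (1 - η t))) t) :
    Tendsto ξ atTop (𝓝 ((1 + a / b) * ηstar - a / b)) := by
  set L := (1 + a / b) * ηstar - a / b
  have hdev : ∀ᶠ t in atTop, HasDerivAt (fun t ↦ ξ t - L)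
      (-(ε * b) * (ξ t - L) + ε * (b + a) * (η t - ηstar)) t :=
    hξ.mono fun t h ↦ (h.sub_const L).congr_deriv (by simp only [L]; field_simp; ring)
  have hforcing : Tendsto (fun t ↦ ε * (b + a) * (η t - ηstar)) atTop (𝓝 0) := by
    simpa using (hη.sub_const ηstar).const_mul (ε * (b + a))
  exact tendsto_sub_nhds_zero_iff.1
    (tendsto_zero_of_hasDerivAt_linear (mul_pos hε hb) hdev hforcing)

theorem iceline_limit_general
    (ε b1 a : ℝ) (hε : 0 < ε) (hb1 : 0 < b1)
    (ηstar : ℝ) (η ξ : ℝ → ℝ)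
    (hη_lim : Tendsto η atTop (nhds ηstar))
    (hξ : ∀ t : ℝ, 0 ≤ t →
      HasDerivAt ξ (ε * (b1 * (η t - ξ t) - a * (1 - η t))) t) :
    -- main claim
    Tendsto ξ atTop (nhds ((1 + a/b1) * ηstar - a/b1)) ∧
    -- consequence for solutions of the retreat field V₊
    (∀ (τ ρ : ℝ) (F Gplus : ℝ → ℝ) (w η' ξ' : ℝ → ℝ) (ws ηs : ℝ),
      (∀ t : ℝ, 0 ≤ t → HasDerivAt w (-τ * (w t - F (η' t))) t) →
      (∀ t : ℝ, 0 ≤ t → HasDerivAt η' (ρ * (w t - Gplus (η' t))) t) →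
      (∀ t : ℝ, 0 ≤ t →
        HasDerivAt ξ' (ε * (b1 * (η' t - ξ' t) - a * (1 - η' t))) t) →
      Tendsto (fun t => (w t, η' t)) atTop (nhds (ws, ηs)) →
      Tendsto ξ' atTop (nhds ((1 + a/b1) * ηs - a/b1))) ∧
    -- analogous statement for the advance field V₋ with b₀ in place of b₁
    (∀ b0 : ℝ, 0 < b0 →
      ∀ (τ ρ : ℝ) (F Gminus : ℝ → ℝ) (w η' ξ' : ℝ → ℝ) (ws ηs : ℝ),
      (∀ t : ℝ, 0 ≤ t → HasDerivAt w (-τ * (w t - F (η' t))) t) →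
      (∀ t : ℝ, 0 ≤ t → HasDerivAt η' (ρ * (w t - Gminus (η' t))) t) →
      (∀ t : ℝ, 0 ≤ t →
        HasDerivAt ξ' (ε * (b0 * (η' t - ξ' t) - a * (1 - η' t))) t) →
      Tendsto (fun t => (w t, η' t)) atTop (nhds (ws, ηs)) →
      Tendsto ξ' atTop (nhds ((1 + a/b0) * ηs - a/b0))) := by
  refine ⟨tendsto_of_hasDerivAt_iceline hε hb1 hη_lim (eventually_atTop.2 ⟨0, hξ⟩), ?_, ?_⟩
  · intro _ _ _ _ _ _ _ _ _ _ _ hξ' hplanar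
    exact tendsto_of_hasDerivAt_iceline hε hb1 hplanar.snd_nhds
      (eventually_atTop.2 ⟨0, hξ'⟩)
  · intro b0 hb0 _ _ _ _ _ _ _ _ _ _ _ hξ' hplanar
    exact tendsto_of_hasDerivAt_iceline hε hb0 hplanar.snd_nhds
      (eventually_atTop.2 ⟨0, hξ'⟩)

/-- If `η(t) → η*` and `ξ′ = ε(b₁(η − ξ) − a(1 − η))` on `[0,∞)`,
then `ξ(t) → (1 + a/b₁)η* − a/b₁`. Consequently, any solution `(w, η, ξ)` of the
retreat vector field `V₊` whose planar component converges to the planar sink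
`(w*₊,s, η*₊,s)` converges to `Q*₊,s = (w*₊,s, η*₊,s, (1+a/b₁)η*₊,s − a/b₁)`, and the
analogous statement holds for `V₋` with `b₀` in place of `b₁`. -/
theorem iceline_limit
    (ε b1 a : ℝ) (hε : 0 < ε) (hb1 : 0 < b1)
    (ηstar : ℝ) (η ξ : ℝ → ℝ)
    (hη_cont : ContinuousOn η (Ici 0))
    (hη_lim : Tendsto η atTop (nhds ηstar))
    (hξ : ∀ t : ℝ, 0 ≤ t →
      HasDerivAt ξ (ε * (b1 * (η t - ξ t) - a * (1 - η t))) t) :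
    -- main claim
    Tendsto ξ atTop (nhds ((1 + a/b1) * ηstar - a/b1)) ∧
    -- consequence for solutions of the retreat field V₊
    (∀ (τ ρ : ℝ) (F Gplus : ℝ → ℝ) (w η' ξ' : ℝ → ℝ) (ws ηs : ℝ),
      (∀ t : ℝ, 0 ≤ t → HasDerivAt w (-τ * (w t - F (η' t))) t) →
      (∀ t : ℝ, 0 ≤ t → HasDerivAt η' (ρ * (w t - Gplus (η' t))) t) →
      (∀ t : ℝ, 0 ≤ t →
        HasDerivAt ξ' (ε * (b1 * (η' t - ξ' t) - a * (1 - η' t))) t) →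
      Tendsto (fun t => (w t, η' t)) atTop (nhds (ws, ηs)) →
      Tendsto ξ' atTop (nhds ((1 + a/b1) * ηs - a/b1))) ∧
    -- analogous statement for the advance field V₋ with b₀ in place of b₁
    (∀ b0 : ℝ, 0 < b0 →
      ∀ (τ ρ : ℝ) (F Gminus : ℝ → ℝ) (w η' ξ' : ℝ → ℝ) (ws ηs : ℝ),
      (∀ t : ℝ, 0 ≤ t → HasDerivAt w (-τ * (w t - F (η' t))) t) →
      (∀ t : ℝ, 0 ≤ t → HasDerivAt η' (ρ * (w t - Gminus (η' t))) t) →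
      (∀ t : ℝ, 0 ≤ t →
        HasDerivAt ξ' (ε * (b0 * (η' t - ξ' t) - a * (1 - η' t))) t) →
      Tendsto (fun t => (w t, η' t)) atTop (nhds (ws, ηs)) →
      Tendsto ξ' atTop (nhds ((1 + a/b0) * ηs - a/b0))) :=
  iceline_limit_general ε b1 a hε hb1 ηstar η ξ hη_lim hξ
end
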